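/- Let E be a real inner product space, let w*, ŵ, ŵ_prev, φ, φ_prev ∈ E, r ∈ ℝ, α, l > 0, and set w̃ = ŵ − w*, ζ = ⟪w̃, φ⟫, e = α⟪ŵ, φ⟫ + r − ⟪ŵ_prev, φ_prev⟫, and w̃' = w̃ − α l e φ. Then (1/l)(‖w̃'‖² − ‖w̃‖²) = −α² ζ² − (1 − α² l ‖φ‖²) e² + (α⟪w*, φ⟫ + r − ⟪ŵ_prev, φ_prev⟫)². -/

import Mathlib

/-! Expanding the square, one gradient step `w̃' = w̃ - (α l e) • φ` changes `‖w̃‖²` by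
`(α l e)² ‖φ‖² - 2 α l e ζ`. Since `w̃ = ŵ - w*`, the quantity squared in the last term of the
claim is `e - α ζ`, and expanding `(e - α ζ)² = e² - 2 α e ζ + α² ζ²` turns the right-hand side
into that same change divided by `l`. -/

open RealInnerProductSpace

theorem norm_sub_smul_sq_sub_norm_sq {E : Type*} [NormedAddCommGroup E]
    [InnerProductSpace ℝ E] (w φ : E) (c : ℝ) :
    ‖w - c • φ‖ ^ 2 - ‖w‖ ^ 2 = c ^ 2 * ‖φ‖ ^ 2 - 2 * c * ⟪w, φ⟫ := by
  rw [norm_sub_sq_real, real_inner_smul_right, norm_smul, mul_pow, Real.norm_eq_abs, sq_abs]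
  ring

theorem lemma_one_first_difference_general {E : Type*} [NormedAddCommGroup E]
    [InnerProductSpace ℝ E]
    (wstar what whatPrev φ φPrev : E) (r α l : ℝ) (hl : 0 < l)
    (wt ζ e : _) (hwt : wt = what - wstar) (hζ : ζ = ⟪wt, φ⟫)
    (he : e = α * ⟪what, φ⟫ + r - ⟪whatPrev, φPrev⟫)
    (wt' : E) (hstep : wt' = wt - (α * l * e) • φ) :
    (1 / l) * (‖wt'‖ ^ 2 - ‖wt‖ ^ 2) =
      -α ^ 2 * ζ ^ 2 - (1 - α ^ 2 * l * ‖φ‖ ^ 2) * e ^ 2 +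
        (α * ⟪wstar, φ⟫ + r - ⟪whatPrev, φPrev⟫) ^ 2 := by
  have target_error : α * ⟪wstar, φ⟫ + r - ⟪whatPrev, φPrev⟫ = e - α * ζ := by
    rw [he, hζ, hwt, inner_sub_left]
    ring
  rw [hstep, norm_sub_smul_sq_sub_norm_sq, target_error, ← hζ]
  field_simp
  ring

theorem lemma_one_first_difference {E : Type*} [NormedAddCommGroup E]
    [InnerProductSpace ℝ E]
    (wstar what whatPrev φ φPrev : E) (r α l : ℝ) (hα : 0 < α) (hl : 0 < l)
    (wt ζ e : _) (hwt : wt = what - wstar) (hζ : ζ = ⟪wt, φ⟫)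
    (he : e = α * ⟪what, φ⟫ + r - ⟪whatPrev, φPrev⟫)
    (wt' : E) (hstep : wt' = wt - (α * l * e) • φ) :
    (1 / l) * (‖wt'‖ ^ 2 - ‖wt‖ ^ 2) =
      -α ^ 2 * ζ ^ 2 - (1 - α ^ 2 * l * ‖φ‖ ^ 2) * e ^ 2 +
        (α * ⟪wstar, φ⟫ + r - ⟪whatPrev, φPrev⟫) ^ 2 :=
  lemma_one_first_difference_general wstar what whatPrev φ φPrev r α l hl wt ζ e hwt hζ he wt' hstep
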